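/- arXiv:2410.19569 — 4 statements merged into one kernel-verified Lean document; each statement's English description precedes it below -/
import Mathlib

section
/- Let d be odd, x ∈ ℤⁿ with gcd of coordinates 1 and x·x ≡ 0 (mod d). If x', x'' ∈ ℤⁿ both satisfy x' ≡ x ≡ x'' (mod d) and x'·x' ≡ x''·x'' ≡ 0 (mod d²), then M_d(x) + ℤ·(x'/d) = M_d(x) + ℤ·(x''/d); i.e. the neighbor lattice N_d(x) is independent of the choice of lift x'. -/
/-- The Kneser neighbor lattice `N_d(x) = M_d(x) + ℤ·(x'/d)` inside `ℝⁿ`. -/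
def neighborSet {n : ℕ} (d : ℕ) (x x' : Fin n → ℤ) : Set (Fin n → ℝ) :=
  {v | ∃ (m : Fin n → ℤ) (c : ℤ), (d : ℤ) ∣ (∑ i, m i * x i) ∧
    ∀ i, v i = (m i : ℝ) + (c : ℝ) * (x' i : ℝ) / (d : ℝ)}

lemma key_dvd {n : ℕ} (d : ℕ) (hdodd : Odd d) (hd : 1 ≤ d) (x x' x'' : Fin n → ℤ)
    (hlift' : ∀ i, (d : ℤ) ∣ (x' i - x i))
    (hlift'' : ∀ i, (d : ℤ) ∣ (x'' i - x i))
    (hiso' : ((d : ℤ) ^ 2) ∣ ∑ i, x' i * x' i)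
    (hiso'' : ((d : ℤ) ^ 2) ∣ ∑ i, x'' i * x'' i) :
    (d : ℤ) ∣ ∑ i, ((x' i - x'' i) / d) * x i := by
  have hd0 : (d : ℤ) ≠ 0 := by positivity
  set c : Fin n → ℤ := fun i => (x' i - x'' i) / d with hcdef
  have hdvd : ∀ i, (d : ℤ) ∣ x' i - x'' i := by
    intro i
    have := dvd_sub (hlift' i) (hlift'' i)
    simpa using this
  have hc : ∀ i, (d : ℤ) * c i = x' i - x'' i := fun i =>
    Int.mul_ediv_cancel' (hdvd i)
  -- d² divides the difference of the two sums
  have hS : ((d : ℤ) ^ 2) ∣ (∑ i, x' i * x' i) - ∑ i, x'' i * x'' i :=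
    dvd_sub hiso' hiso''
  -- rewrite the difference
  have hterm : ∀ i : Fin n, x' i * x' i - x'' i * x'' i =
      (d : ℤ) * (2 * (c i * x i)) + (d : ℤ) * (c i * ((x' i - x i) + (x'' i - x i))) := by
    intro i
    linear_combination (x' i + x'' i) * (hc i).symm
  have hS2 : ((d : ℤ) ^ 2) ∣ (d : ℤ) * (2 * ∑ i, c i * x i) := by
    have h2 : ((d : ℤ) ^ 2) ∣ ∑ i, (d : ℤ) * (c i * ((x' i - x i) + (x'' i - x i))) := by
      apply Finset.dvd_sum
      intro i _
      have : (d : ℤ) ∣ (x' i - x i) + (x'' i - x i) := dvd_add (hlift' i) (hlift'' i)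
      obtain ⟨k, hk⟩ := this
      refine ⟨c i * k, by rw [hk]; ring⟩
    have heq2 : (d : ℤ) * (2 * ∑ i, c i * x i) = ∑ i, (d : ℤ) * (2 * (c i * x i)) := by
      rw [Finset.mul_sum, Finset.mul_sum]
    have heq : (∑ i, x' i * x' i) - (∑ i, x'' i * x'' i) =
        (d : ℤ) * (2 * ∑ i, c i * x i) +
        ∑ i, (d : ℤ) * (c i * ((x' i - x i) + (x'' i - x i))) := by
      rw [← Finset.sum_sub_distrib, Finset.sum_congr rfl (fun i _ => hterm i),
        Finset.sum_add_distrib, heq2]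
    have := dvd_sub hS h2
    rw [heq] at this
    simpa using this
  have hdvd2 : (d : ℤ) ∣ 2 * ∑ i, c i * x i := by
    rw [sq] at hS2
    exact (mul_dvd_mul_iff_left hd0).mp hS2
  have hcop : IsCoprime (d : ℤ) 2 := by
    have hodd : Odd (d : ℤ) := by exact_mod_cast hdodd
    rcases hodd with ⟨k, hk⟩
    exact ⟨1, -k, by omega⟩
  have := hcop.dvd_of_dvd_mul_left hdvd2
  simpa [mul_comm] using this

lemma neighbor_subset {n : ℕ} (d : ℕ) (hdodd : Odd d) (hd : 1 ≤ d) (x x' x'' : Fin n → ℤ)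
    (hlift' : ∀ i, (d : ℤ) ∣ (x' i - x i))
    (hlift'' : ∀ i, (d : ℤ) ∣ (x'' i - x i))
    (hiso' : ((d : ℤ) ^ 2) ∣ ∑ i, x' i * x' i)
    (hiso'' : ((d : ℤ) ^ 2) ∣ ∑ i, x'' i * x'' i) :
    neighborSet d x x' ⊆ neighborSet d x x'' := by
  have hd0 : (d : ℝ) ≠ 0 := by positivity
  have hkey := key_dvd d hdodd hd x x' x'' hlift' hlift'' hiso' hiso''
  rintro v ⟨m, c, hm, hv⟩
  have hdvd : ∀ i, (d : ℤ) ∣ x' i - x'' i := by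
    intro i
    have := dvd_sub (hlift' i) (hlift'' i)
    simpa using this
  have hc : ∀ i, (d : ℤ) * ((x' i - x'' i) / d) = x' i - x'' i := fun i =>
    Int.mul_ediv_cancel' (hdvd i)
  refine ⟨fun i => m i + c * ((x' i - x'' i) / d), c, ?_, ?_⟩
  · have : (∑ i, (m i + c * ((x' i - x'' i) / d)) * x i) =
        (∑ i, m i * x i) + c * ∑ i, ((x' i - x'' i) / d) * x i := by
      rw [Finset.mul_sum, ← Finset.sum_add_distrib]
      exact Finset.sum_congr rfl fun i _ => by ring
    rw [this]
    exact dvd_add hm (Dvd.dvd.mul_left hkey c)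
  · intro i
    rw [hv i]
    have hcr : (d : ℝ) * (((x' i - x'' i) / (d : ℤ) : ℤ) : ℝ) = (x' i : ℝ) - (x'' i : ℝ) := by
      exact_mod_cast congrArg (Int.cast : ℤ → ℝ) (hc i)
    push_cast
    field_simp
    linear_combination (-(c : ℝ)) * hcr

/-- For `d` odd, the neighbor lattice `N_d(x)` does not depend on the choice of the lift
`x'` of `x` with `x'·x' ≡ 0 (mod d²)`. -/
theorem stmt5 {n : ℕ} (d : ℕ) (hdodd : Odd d) (hd : 1 ≤ d) (x x' x'' : Fin n → ℤ)
    (hgcd : Finset.univ.gcd x = 1)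
    (hiso : (d : ℤ) ∣ ∑ i, x i * x i)
    (hlift' : ∀ i, (d : ℤ) ∣ (x' i - x i))
    (hlift'' : ∀ i, (d : ℤ) ∣ (x'' i - x i))
    (hiso' : ((d : ℤ) ^ 2) ∣ ∑ i, x' i * x' i)
    (hiso'' : ((d : ℤ) ^ 2) ∣ ∑ i, x'' i * x'' i) :
    neighborSet d x x' = neighborSet d x x'' := by
  apply Set.Subset.antisymm
  · exact neighbor_subset d hdodd hd x x' x'' hlift' hlift'' hiso' hiso''
  · exact neighbor_subset d hdodd hd x x'' x' hlift'' hlift' hiso'' hiso'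
end

section
/- Let L ⊂ ℝ²⁸ be the unimodular lattice L = D₂₈ ∪ (η⁺₂₈ + D₂₈) where D₂₈ = {x ∈ ℤ²⁸ : Σ xᵢ ≡ 0 mod 2} and η⁺₂₈ = (1/2,…,1/2). Then the set {v ∈ L : v·v ≤ 7} generates L as a ℤ-module, but the set {v ∈ L : v·v ≤ 6} generates only the index-2 sublattice D₂₈. -/
/-- Standard dot product on `ℝⁿ`. -/
def dotR {n : ℕ} (u v : Fin n → ℝ) : ℝ := ∑ i, u i * v i

/-- The root lattice `D₂₈ ⊂ ℝ²⁸`: integer vectors with even coordinate sum. -/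
def D28Set : Set (Fin 28 → ℝ) :=
  {x | ∃ v : Fin 28 → ℤ, (∀ i, x i = (v i : ℝ)) ∧ (2 : ℤ) ∣ ∑ i, v i}

/-- `η⁺₂₈ = (1/2, …, 1/2)`. -/
noncomputable def eta28 : Fin 28 → ℝ := fun _ => 1 / 2

/-- The unimodular lattice `L = D₂₈ ∪ (η⁺₂₈ + D₂₈)`. -/
noncomputable def L28 : Set (Fin 28 → ℝ) := D28Set ∪ ((eta28 + ·) '' D28Set)

/-- `D₂₈` as a `ℤ`-submodule. -/
def D28Sub : Submodule ℤ (Fin 28 → ℝ) where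
  carrier := D28Set
  zero_mem' := ⟨0, fun i => by simp, by simp⟩
  add_mem' := by
    rintro x y ⟨v, hv, hd⟩ ⟨w, hw, he⟩
    refine ⟨v + w, fun i => by simp [hv i, hw i], ?_⟩
    simp only [Pi.add_apply]
    rw [Finset.sum_add_distrib]
    exact dvd_add hd he
  smul_mem' := by
    rintro n x ⟨v, hv, hd⟩
    refine ⟨n • v, fun i => by simp [hv i], ?_⟩
    simp only [Pi.smul_apply, smul_eq_mul, ← Finset.mul_sum]
    exact Dvd.dvd.mul_left hd n

/-- `L₂₈` as a `ℤ`-submodule (half-integer description). -/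
def L28Sub : Submodule ℤ (Fin 28 → ℝ) where
  carrier := {x | ∃ w : Fin 28 → ℤ, (∀ i, x i = (w i : ℝ) / 2) ∧
      (∀ i, w i % 2 = w 0 % 2) ∧ (4 : ℤ) ∣ ∑ i, w i}
  zero_mem' := ⟨0, fun i => by simp, fun i => by simp, by simp⟩
  add_mem' := by
    rintro x y ⟨v, hv, hp, hd⟩ ⟨w, hw, hq, he⟩
    refine ⟨v + w, fun i => by simp [hv i, hw i]; ring, fun i => ?_, ?_⟩
    · have h1 := hp i; have h2 := hq i; simp only [Pi.add_apply]; omega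
    · simp only [Pi.add_apply]; rw [Finset.sum_add_distrib]; exact dvd_add hd he
  smul_mem' := by
    rintro n x ⟨v, hv, hp, hd⟩
    refine ⟨n • v, fun i => by simp [hv i]; ring, fun i => ?_, ?_⟩
    · have h1 := hp i; simp only [Pi.smul_apply, smul_eq_mul]
      rw [Int.mul_emod, h1, ← Int.mul_emod]
    · simp only [Pi.smul_apply, smul_eq_mul, ← Finset.mul_sum]
      exact Dvd.dvd.mul_left hd n

lemma L28_eq_sub : L28 = (L28Sub : Set (Fin 28 → ℝ)) := by
  ext x
  constructor
  · rintro (⟨v, hv, hd⟩ | ⟨y, ⟨v, hv, hd⟩, rfl⟩)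
    · refine ⟨fun i => 2 * v i, fun i => by rw [hv i]; push_cast; ring,
        fun i => by show 2 * v i % 2 = 2 * v 0 % 2; omega, ?_⟩
      obtain ⟨k, hk⟩ := hd
      show (4 : ℤ) ∣ ∑ i, 2 * v i
      have : ∑ i, 2 * v i = 2 * ∑ i, v i := by rw [Finset.mul_sum]
      omega
    · refine ⟨fun i => 2 * v i + 1, fun i => by simp [eta28, hv i]; push_cast; ring,
        fun i => by show (2 * v i + 1) % 2 = (2 * v 0 + 1) % 2; omega, ?_⟩
      obtain ⟨k, hk⟩ := hd
      show (4 : ℤ) ∣ ∑ i, (2 * v i + 1)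
      have : ∑ i, (2 * v i + 1) = 2 * ∑ i, v i + 28 := by
        rw [Finset.sum_add_distrib, Finset.mul_sum]
        simp
      omega
  · rintro ⟨w, hw, hp, hd⟩
    rcases Int.emod_two_eq (w 0) with h0 | h0
    · left
      have h2 : ∀ i, w i % 2 = 0 := fun i => by rw [hp i]; exact h0
      refine ⟨fun i => w i / 2, fun i => ?_, ?_⟩
      · show x i = ((w i / 2 : ℤ) : ℝ)
        set a := w i / 2 with ha
        have h3 : w i = 2 * a := by rw [ha]; have := h2 i; omega
        rw [hw i, h3]
        push_cast
        ring
      · show (2 : ℤ) ∣ ∑ i, (w i / 2)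
        have hs : ∑ i, w i = 2 * ∑ i, (w i / 2) := by
          rw [Finset.mul_sum]
          exact Finset.sum_congr rfl (fun i _ => by have := h2 i; omega)
        omega
    · right
      have h2 : ∀ i, w i % 2 = 1 := fun i => by rw [hp i]; exact h0
      refine ⟨fun i => x i - 1/2, ⟨fun i => (w i - 1) / 2, fun i => ?_, ?_⟩, ?_⟩
      · show x i - 1/2 = (((w i - 1) / 2 : ℤ) : ℝ)
        set a := (w i - 1) / 2 with ha
        have h3 : w i = 2 * a + 1 := by rw [ha]; have := h2 i; omega
        rw [hw i, h3]
        push_cast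
        ring
      · show (2 : ℤ) ∣ ∑ i, ((w i - 1) / 2)
        have hs : ∑ i, w i = 2 * (∑ i, ((w i - 1) / 2)) + 28 := by
          rw [Finset.mul_sum]
          have : ∑ i, (2 * ((w i - 1) / 2) + 1) = ∑ i, 2 * ((w i - 1) / 2) + 28 := by
            rw [Finset.sum_add_distrib]; simp
          rw [← this]
          exact Finset.sum_congr rfl (fun i _ => by have := h2 i; omega)
        omega
      · funext i
        simp [eta28]

/-- Any vector in the coset `η + D₂₈` has norm at least 7. -/
lemma coset_norm (x : Fin 28 → ℝ) (hx : x ∈ (eta28 + ·) '' D28Set) :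
    (7 : ℝ) ≤ dotR x x := by
  obtain ⟨y, ⟨v, hv, -⟩, rfl⟩ := hx
  have key : ∀ i, (1/4 : ℝ) ≤ (eta28 + y) i * (eta28 + y) i := by
    intro i
    have h1 : (1 : ℤ) ≤ (2 * v i + 1) ^ 2 := by
      have h0 : (2 * v i + 1) ≠ 0 := by omega
      have := Int.one_le_abs h0
      nlinarith [sq_abs (2 * v i + 1)]
    have h1' : (1 : ℝ) ≤ (2 * (v i : ℝ) + 1) ^ 2 := by exact_mod_cast h1
    have : (eta28 + y) i = (2 * (v i : ℝ) + 1) / 2 := by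
      simp [eta28, hv i]; ring
    rw [this]
    nlinarith
  calc (7 : ℝ) = ∑ _i : Fin 28, (1/4 : ℝ) := by simp; norm_num
    _ ≤ dotR (eta28 + y) (eta28 + y) := Finset.sum_le_sum (fun i _ => key i)

lemma D28_subset_span (c : ℝ) (hc : (6 : ℝ) ≤ c) :
    D28Set ⊆ (Submodule.span ℤ {v ∈ L28 | dotR v v ≤ c} : Submodule ℤ (Fin 28 → ℝ)) := by
  set S := (Submodule.span ℤ {v ∈ L28 | dotR v v ≤ c} : Submodule ℤ (Fin 28 → ℝ)) with hS
  -- generators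
  set g : Fin 28 → (Fin 28 → ℝ) :=
    fun i j => (if j = i then 1 else 0) - (if j = (0 : Fin 28) then 1 else 0) with hg
  set h : Fin 28 → ℝ := fun j => if j = (0 : Fin 28) then 2 else 0 with hh
  have hgmem : ∀ i, g i ∈ S := by
    intro i
    by_cases hi : i = 0
    · have : g i = 0 := by funext j; simp [hg, hi]
      rw [this]; exact Submodule.zero_mem S
    · apply Submodule.subset_span
      constructor
      · left
        refine ⟨fun j => (if j = i then 1 else 0) - (if j = (0 : Fin 28) then 1 else 0),
          fun j => by simp only [hg]; split_ifs <;> norm_num, ?_⟩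
        simp [Finset.sum_sub_distrib]
      · have hdg : dotR (g i) (g i) = 2 := by
          have : ∀ j, g i j * g i j =
              (if j = i then (1:ℝ) else 0) + (if j = (0 : Fin 28) then 1 else 0) := by
            intro j
            simp only [hg]
            split_ifs with h1 h2
            · exact absurd (h1 ▸ h2) hi  -- j = i and j = 0 → i = 0
            · norm_num
            · norm_num
            · norm_num
          rw [dotR, Finset.sum_congr rfl (fun j _ => this j)]
          norm_num [Finset.sum_add_distrib]
        rw [hdg]; linarith
  have hhmem : h ∈ S := by
    apply Submodule.subset_span
    constructor
    · left
      refine ⟨fun j => if j = (0 : Fin 28) then 2 else 0,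
        fun j => by simp only [hh]; split_ifs <;> norm_num, ?_⟩
      simp
    · have hdh : dotR h h = 4 := by
        have : ∀ j, h j * h j = (if j = (0 : Fin 28) then (4:ℝ) else 0) := by
          intro j; simp only [hh]; split_ifs <;> norm_num
        rw [dotR, Finset.sum_congr rfl (fun j _ => this j)]
        simp
      rw [hdh]; linarith
  rintro x ⟨v, hv, ⟨k, hk⟩⟩
  have key : x = (∑ i, v i • g i) + k • h := by
    funext j
    have e1 : ((∑ i, v i • g i) + k • h) j = (∑ i, (v i : ℝ) * g i j) + (k : ℝ) * h j := by
      simp [Finset.sum_apply, zsmul_eq_mul]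
    rw [e1, hv j]
    have e2 : ∀ i, (v i : ℝ) * g i j
        = (if j = i then (v i : ℝ) else 0) - (if j = (0:Fin 28) then (v i : ℝ) else 0) := by
      intro i; simp only [hg]; split_ifs <;> ring
    rw [Finset.sum_congr rfl (fun i _ => e2 i), Finset.sum_sub_distrib]
    have e3 : ∑ i, (if j = i then (v i : ℝ) else 0) = (v j : ℝ) := by
      simp [Finset.sum_ite_eq]
    have e4 : ∑ i : Fin 28, (if j = (0:Fin 28) then (v i : ℝ) else 0)
        = if j = (0:Fin 28) then ((2*k : ℤ) : ℝ) else 0 := by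
      split_ifs with hj
      · rw [← hk]; push_cast; rfl
      · simp
    rw [e3, e4, hh]
    by_cases hj : j = 0
    · simp only [if_pos hj]
      push_cast
      ring
    · simp only [if_neg hj]
      push_cast
      ring
  rw [key]
  exact Submodule.add_mem S
    (Submodule.sum_mem S (fun i _ => Submodule.smul_mem S (v i) (hgmem i)))
    (Submodule.smul_mem S k hhmem)

/-- The vectors of norm `≤ 7` of `L = D₂₈ ∪ (η⁺₂₈ + D₂₈)` generate `L` over `ℤ`,
but those of norm `≤ 6` generate only the index-2 sublattice `D₂₈`. -/
theorem stmt11 :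
    ((Submodule.span ℤ {v ∈ L28 | dotR v v ≤ 7} : Submodule ℤ (Fin 28 → ℝ)) : Set (Fin 28 → ℝ))
        = L28 ∧
    ((Submodule.span ℤ {v ∈ L28 | dotR v v ≤ 6} : Submodule ℤ (Fin 28 → ℝ)) : Set (Fin 28 → ℝ))
        = D28Set := by
  constructor
  · apply le_antisymm
    · have h : Submodule.span ℤ {v ∈ L28 | dotR v v ≤ 7} ≤ L28Sub := by
        apply Submodule.span_le.mpr
        intro v hv
        have := hv.1
        rw [L28_eq_sub] at this
        exact this
      intro x hx
      rw [L28_eq_sub]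
      exact h hx
    · intro x hx
      rcases hx with hx | ⟨y, hy, rfl⟩
      · exact D28_subset_span 7 (by norm_num) hx
      · have heta : eta28 ∈ (Submodule.span ℤ {v ∈ L28 | dotR v v ≤ 7} :
            Submodule ℤ (Fin 28 → ℝ)) := by
          apply Submodule.subset_span
          refine ⟨Or.inr ⟨0, ⟨0, fun i => by simp, by simp⟩, by simp⟩, ?_⟩
          simp [dotR, eta28]
          norm_num
        exact Submodule.add_mem _ heta (D28_subset_span 7 (by norm_num) hy)
  · apply le_antisymm
    · have h : Submodule.span ℤ {v ∈ L28 | dotR v v ≤ 6} ≤ D28Sub := by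
        apply Submodule.span_le.mpr
        rintro v ⟨hvL, hv6⟩
        rcases hvL with h | h
        · exact h
        · exact absurd (coset_norm v h) (by linarith)
      exact fun x hx => h hx
    · exact D28_subset_span 6 le_rfl
end

section
/- Let d be even, x ∈ ℤⁿ a d-isotropic vector (gcd of coordinates 1 and x·x ≡ 0 mod 2d). Suppose x', x'' ∈ ℤⁿ both satisfy x' ≡ x ≡ x'' mod d and x'·x' ≡ x''·x'' ≡ 0 mod d². Then the unimodular neighbor lattices M_d(x) + ℤ(x'/d) and M_d(x) + ℤ(x''/d) are equal if and only if 2x'·x ≡ 2x''·x (mod 2d²). -/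
lemma neighbor_subset_s15 {n d : ℕ} (hd : 1 ≤ d) (x a b : Fin n → ℤ)
    (h : ∀ i, (d : ℤ) ∣ (b i - a i))
    (hx : ((d : ℤ) ^ 2) ∣ ∑ i, (b i - a i) * x i) :
    neighborSet d x b ⊆ neighborSet d x a := by
  have hd0 : (d : ℤ) ≠ 0 := by exact_mod_cast (by omega : d ≠ 0)
  have hdR : (d : ℝ) ≠ 0 := by exact_mod_cast hd0
  rintro v ⟨m, c, hdvd, hcoord⟩
  choose u hu using h
  have hux : (d : ℤ) ∣ ∑ i, u i * x i := by
    have heq : ∑ i, (b i - a i) * x i = d * ∑ i, u i * x i := by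
      rw [Finset.mul_sum]
      exact Finset.sum_congr rfl fun i _ => by rw [hu i]; ring
    rw [heq, sq] at hx
    exact (mul_dvd_mul_iff_left hd0).mp hx
  refine ⟨fun i => m i + c * u i, c, ?_, ?_⟩
  · have heq : ∑ i, (m i + c * u i) * x i = ∑ i, m i * x i + c * ∑ i, u i * x i := by
      rw [Finset.mul_sum, ← Finset.sum_add_distrib]
      exact Finset.sum_congr rfl fun i _ => by ring
    rw [heq]
    exact dvd_add hdvd (hux.mul_left c)
  · intro i
    have hb : (b i : ℝ) = d * u i + a i := by
      exact_mod_cast (by linarith [hu i] : b i = (d : ℤ) * u i + a i)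
    rw [hcoord i, hb]
    push_cast
    field_simp
    ring

/-- For `d` even and `x` `d`-isotropic, two lifts `x'`, `x''` define the same unimodular
neighbor lattice if and only if `2x'·x ≡ 2x''·x (mod 2d²)`. -/
theorem stmt15 {n : ℕ} (d : ℕ) (hdeven : Even d) (hd : 1 ≤ d) (x x' x'' : Fin n → ℤ)
    (hgcd : Finset.univ.gcd x = 1)
    (hiso : ((2 * d : ℕ) : ℤ) ∣ ∑ i, x i * x i)
    (hlift' : ∀ i, (d : ℤ) ∣ (x' i - x i))
    (hlift'' : ∀ i, (d : ℤ) ∣ (x'' i - x i))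
    (hiso' : ((d : ℤ) ^ 2) ∣ ∑ i, x' i * x' i)
    (hiso'' : ((d : ℤ) ^ 2) ∣ ∑ i, x'' i * x'' i) :
    neighborSet d x x' = neighborSet d x x'' ↔
      (2 * (d : ℤ) ^ 2) ∣ (2 * (∑ i, x' i * x i) - 2 * (∑ i, x'' i * x i)) := by
  have hd0 : (d : ℤ) ≠ 0 := by exact_mod_cast (by omega : d ≠ 0)
  have hdR : (d : ℝ) ≠ 0 := by exact_mod_cast hd0
  -- The RHS is equivalent to d² ∣ (x'·x − x''·x)
  have hrhs : (2 * (d : ℤ) ^ 2) ∣ (2 * (∑ i, x' i * x i) - 2 * (∑ i, x'' i * x i)) ↔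
      ((d : ℤ) ^ 2) ∣ ((∑ i, x' i * x i) - ∑ i, x'' i * x i) := by
    rw [show 2 * (∑ i, x' i * x i) - 2 * (∑ i, x'' i * x i)
        = 2 * ((∑ i, x' i * x i) - ∑ i, x'' i * x i) by ring]
    exact mul_dvd_mul_iff_left (two_ne_zero)
  rw [hrhs]
  constructor
  · -- Forward: if the lattices are equal then d² ∣ x'·x − x''·x
    intro hset
    have hmem : (fun i => (x' i : ℝ) / d) ∈ neighborSet d x x' := by
      refine ⟨fun _ => 0, 1, by simp, fun i => by push_cast; ring⟩
    rw [hset] at hmem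
    obtain ⟨m, c, hdvd, hcoord⟩ := hmem
    have key : ∀ i, x' i = d * m i + c * x'' i := by
      intro i
      have h := hcoord i
      have : (x' i : ℝ) = ((d : ℤ) * m i + c * x'' i : ℤ) := by
        push_cast
        field_simp at h
        linarith
      exact_mod_cast this
    -- c ≡ 1 mod d
    have hxi : ∀ i, (d : ℤ) ∣ (c - 1) * x i := by
      intro i
      have e : (c - 1) * x i = (x' i - x i) - c * (x'' i - x i) - d * m i := by
        linear_combination -key i
      rw [e]
      exact dvd_sub (dvd_sub (hlift' i) ((hlift'' i).mul_left c)) ⟨m i, rfl⟩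
    have hc1 : (d : ℤ) ∣ c - 1 := by
      have h1 : (d : ℤ) ∣ Finset.univ.gcd (fun i => (c - 1) * x i) :=
        Finset.dvd_gcd fun i _ => hxi i
      rw [Finset.gcd_mul_left, hgcd, mul_one] at h1
      exact dvd_normalize_iff.mp h1
    -- d ∣ x''·x
    have hwx : (d : ℤ) ∣ ∑ i, x'' i * x i := by
      have h1 : (d : ℤ) ∣ ∑ i, (x'' i - x i) * x i :=
        Finset.dvd_sum fun i _ => (hlift'' i).mul_right _
      have h2 : (d : ℤ) ∣ ∑ i, x i * x i :=
        dvd_trans ⟨2, by push_cast; ring⟩ hiso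
      have heq : ∑ i, x'' i * x i = (∑ i, (x'' i - x i) * x i) + ∑ i, x i * x i := by
        rw [← Finset.sum_add_distrib]
        exact Finset.sum_congr rfl fun i _ => by ring
      rw [heq]
      exact dvd_add h1 h2
    have hsum : (∑ i, x' i * x i) - ∑ i, x'' i * x i
        = d * (∑ i, m i * x i) + (c - 1) * ∑ i, x'' i * x i := by
      rw [Finset.mul_sum, Finset.mul_sum, ← Finset.sum_add_distrib, ← Finset.sum_sub_distrib]
      exact Finset.sum_congr rfl fun i _ => by linear_combination x i * key i
    rw [hsum]
    exact dvd_add (by rw [sq]; exact mul_dvd_mul_left _ hdvd)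
      (by rw [sq]; exact mul_dvd_mul hc1 hwx)
  · -- Backward: if d² ∣ x'·x − x''·x then the lattices agree
    intro hdvd
    have h1 : ∀ i, (d : ℤ) ∣ (x' i - x'' i) := by
      intro i
      have := dvd_sub (hlift' i) (hlift'' i)
      simpa using this
    have h2 : ∀ i, (d : ℤ) ∣ (x'' i - x' i) := by
      intro i
      have := (h1 i).neg_right
      rwa [neg_sub] at this
    have hs1 : ((d : ℤ) ^ 2) ∣ ∑ i, (x' i - x'' i) * x i := by
      have heq : ∑ i, (x' i - x'' i) * x i = (∑ i, x' i * x i) - ∑ i, x'' i * x i := by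
        rw [← Finset.sum_sub_distrib]
        exact Finset.sum_congr rfl fun i _ => by ring
      rw [heq]; exact hdvd
    have hs2 : ((d : ℤ) ^ 2) ∣ ∑ i, (x'' i - x' i) * x i := by
      have heq : ∑ i, (x'' i - x' i) * x i = -((∑ i, (x' i - x'' i) * x i)) := by
        rw [← Finset.sum_neg_distrib]
        exact Finset.sum_congr rfl fun i _ => by ring
      rw [heq]; exact hs1.neg_right
    exact Set.Subset.antisymm
      (neighbor_subset_s15 hd x x'' x' h1 hs1)
      (neighbor_subset_s15 hd x x' x'' h2 hs2)
end

section
/- Let n ≥ 1, d ≥ 1, and let x ∈ ℤⁿ be such that xᵢ ≢ 0 (mod d) for all i, and suppose there exists an index j such that a := xⱼ is coprime to d and the number of coordinates of x congruent to a mod d is maximal among all residues. Then there exist a signed permutation σ of ℤⁿ (a composition of a coordinate permutation and sign changes) and y ∈ ℤⁿ with 1 = y₁ ≤ y₂ ≤ ⋯ ≤ yₙ ≤ d/2 such that σ(x) ≡ a·y (mod d·ℤⁿ). -/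
/-- Normalization of isotropic vectors under the isometry group of `ℤⁿ`: if no coordinate
of `x` is `0 mod d` and `a = xⱼ` is coprime to `d` with `m_a(x)` maximal, then after a
signed permutation (permutation `σ` and signs `s`), `x` becomes `a·y mod d` with
`1 = y₁ ≤ y₂ ≤ ⋯ ≤ yₙ ≤ d/2`. -/
theorem stmt18 {n : ℕ} (hn : 1 ≤ n) (d : ℕ) (hd : 1 ≤ d) (x : Fin n → ℤ)
    (a : ℤ) (j : Fin n) (ha : a = x j)
    (hnz : ∀ i, ¬ ((d : ℤ) ∣ x i))
    (hcop : IsCoprime a (d : ℤ))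
    (hmax : ∀ b : ℤ, Set.ncard {i : Fin n | x i ≡ b [ZMOD (d : ℤ)]} ≤
      Set.ncard {i : Fin n | x i ≡ a [ZMOD (d : ℤ)]}) :
    ∃ (σ : Equiv.Perm (Fin n)) (s : Fin n → ℤ) (y : Fin n → ℤ),
      (∀ i, s i = 1 ∨ s i = -1) ∧
      y ⟨0, hn⟩ = 1 ∧ Monotone y ∧ (∀ i, 2 * y i ≤ (d : ℤ)) ∧
      ∀ i, s i * x (σ i) ≡ a * y i [ZMOD (d : ℤ)] := by
  have hdpos : (0:ℤ) < d := by exact_mod_cast hd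
  have hd2 : (2:ℤ) ≤ d := by
    rcases Nat.lt_or_ge d 2 with h | h
    · interval_cases d
      · exact absurd (one_dvd (x j)) (by simpa using hnz j)
    · exact_mod_cast h
  obtain ⟨u, v, huv⟩ := hcop
  have h1 : u * a ≡ 1 [ZMOD (d:ℤ)] := by
    refine (Int.ModEq.symm (Int.modEq_iff_dvd.mpr ⟨-v, by linear_combination huv⟩))
  set c : Fin n → ℤ := fun i => (u * x i) % (d:ℤ) with hcdef
  have hcmod : ∀ i, c i ≡ u * x i [ZMOD (d:ℤ)] := fun i => Int.emod_emod_of_dvd _ dvd_rfl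
  have hclt : ∀ i, c i < d := fun i => Int.emod_lt_of_pos _ hdpos
  have hcnn : ∀ i, 0 ≤ c i := fun i => Int.emod_nonneg _ (by positivity)
  have hmod : ∀ i, x i ≡ a * c i [ZMOD (d:ℤ)] := by
    intro i
    have h2 : a * c i ≡ a * (u * x i) [ZMOD (d:ℤ)] := (hcmod i).mul_left a
    have h3 : u * a * x i ≡ 1 * x i [ZMOD (d:ℤ)] := h1.mul_right (x i)
    calc x i = 1 * x i := by ring
    _ ≡ u * a * x i [ZMOD (d:ℤ)] := h3.symm
    _ = a * (u * x i) := by ring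
    _ ≡ a * c i [ZMOD (d:ℤ)] := h2.symm
  have hc1 : ∀ i, 1 ≤ c i := by
    intro i
    rcases (hcnn i).lt_or_eq with h | h
    · linarith
    · exfalso
      apply hnz i
      have hdu : (d:ℤ) ∣ u * x i := Int.dvd_of_emod_eq_zero h.symm
      have : (d:ℤ) ∣ a * (u * x i) := hdu.mul_left a
      have h4 : x i - a * (u * x i) = v * d * x i := by linear_combination (-(x i)) * huv
      have h5 : (d:ℤ) ∣ x i - a * (u * x i) := h4 ▸ ⟨v * x i, by ring⟩
      have := dvd_add h5 this
      simpa using this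
  set y' : Fin n → ℤ := fun i => min (c i) ((d:ℤ) - c i) with hy'def
  set s' : Fin n → ℤ := fun i => if 2 * c i ≤ (d:ℤ) then 1 else -1 with hs'def
  have hy'pos : ∀ i, 1 ≤ y' i := fun i =>
    le_min (hc1 i) (by have := hclt i; omega)
  have hy'le : ∀ i, 2 * y' i ≤ (d:ℤ) := by
    intro i
    rcases le_total (c i) ((d:ℤ) - c i) with h | h
    · rw [hy'def]; simp only [min_eq_left h]; linarith
    · rw [hy'def]; simp only [min_eq_right h]; linarith
  have hkey : ∀ i, s' i * x i ≡ a * y' i [ZMOD (d:ℤ)] := by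
    intro i
    by_cases h : 2 * c i ≤ (d:ℤ)
    · have hy : y' i = c i := min_eq_left (by linarith)
      have hs : s' i = 1 := if_pos h
      rw [hy, hs, one_mul]
      exact hmod i
    · have hy : y' i = (d:ℤ) - c i := min_eq_right (by linarith)
      have hs : s' i = -1 := if_neg h
      rw [hy, hs]
      have h6 : -x i ≡ -(a * c i) [ZMOD (d:ℤ)] := (hmod i).neg
      have h7 : -(a * c i) ≡ a * ((d:ℤ) - c i) [ZMOD (d:ℤ)] := by
        refine Int.modEq_iff_dvd.mpr ⟨a, by ring⟩
      calc (-1 : ℤ) * x i = -x i := by ring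
      _ ≡ -(a * c i) [ZMOD (d:ℤ)] := h6
      _ ≡ a * ((d:ℤ) - c i) [ZMOD (d:ℤ)] := h7
  have hcj : c j = 1 := by
    have : c j = (u * a) % (d:ℤ) := by rw [hcdef]; simp [ha]
    rw [this, h1]
    exact Int.emod_eq_of_lt (by norm_num) (by linarith)
  have hy'j : y' j = 1 := by
    rw [hy'def]; simp only [hcj]
    exact min_eq_left (by linarith)
  refine ⟨Tuple.sort y', fun i => s' (Tuple.sort y' i), fun i => y' (Tuple.sort y' i),
    ?_, ?_, ?_, ?_, ?_⟩
  · intro i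
    by_cases h : 2 * c (Tuple.sort y' i) ≤ (d:ℤ)
    · left; exact if_pos h
    · right; exact if_neg h
  · have hmono : Monotone (y' ∘ Tuple.sort y') := Tuple.monotone_sort y'
    have hle : y' (Tuple.sort y' ⟨0, hn⟩) ≤ y' (Tuple.sort y' ((Tuple.sort y').symm j)) := by
      apply hmono
      simp [Fin.le_def]
    simp only [Equiv.apply_symm_apply, hy'j] at hle
    exact le_antisymm hle (hy'pos _)
  · exact Tuple.monotone_sort y'
  · intro i; exact hy'le _
  · intro i; exact hkey _
end
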